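/- Let p be an odd prime, let ν be an integer with 1 ≤ ν ≤ (p−1)/2, and let m ∈ ℤ. Then binom(m+1, 2ν) + binom(m, 2ν) ≠ 0 in 𝔽_p if and only if 2ν − 1 ≤ (m mod p) ≤ p − 1, where (m mod p) denotes the unique representative of m modulo p in {0, 1, …, p−1}. -/
import Mathlib

/-!
For an integer `m` and a natural number `n`, `Ring.choose (m : ℤ) n` is the generalized
binomial coefficient `binom(m, n) = ∏_{i=0}^{n-1}(m-i)/n!`; its image in `𝔽_p = ZMod p` is
taken under the natural map `ℤ → ZMod p`.
-/

namespace SL2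

private lemma descPoch_prod (n : ℕ) (m : ℤ) :
    (descPochhammer ℤ n).eval m = ∏ i ∈ Finset.range n, (m - i) := by
  induction n with
  | zero => simp
  | succ n ih => rw [descPochhammer_succ_eval, ih, Finset.prod_range_succ]

private lemma key_identity (ν : ℕ) (hν : 1 ≤ ν) (m : ℤ) :
    ((2 * ν).factorial : ℤ) * (Ring.choose (m + 1) (2 * ν) + Ring.choose m (2 * ν)) =
      (∏ i ∈ Finset.range (2 * ν - 1), (m - i)) * (2 * m + 2 - 2 * ν) := by
  have h1 : ((2*ν).factorial : ℤ) * Ring.choose (m+1) (2*ν)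
      = (descPochhammer ℤ (2*ν)).eval (m+1) := by
    rw [Polynomial.eval_eq_smeval, Ring.descPochhammer_eq_factorial_smul_choose, nsmul_eq_mul]
  have h2 : ((2*ν).factorial : ℤ) * Ring.choose m (2*ν)
      = (descPochhammer ℤ (2*ν)).eval m := by
    rw [Polynomial.eval_eq_smeval, Ring.descPochhammer_eq_factorial_smul_choose, nsmul_eq_mul]
  have hk : 2 * ν = (2 * ν - 1) + 1 := by omega
  have e1 : ∏ i ∈ Finset.range (2*ν-1), ((m+1) - ((i+1 : ℕ) : ℤ))
      = ∏ i ∈ Finset.range (2*ν-1), (m - i) := by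
    refine Finset.prod_congr rfl fun i _ => ?_
    push_cast; ring
  have hc : ((2*ν - 1 : ℕ) : ℤ) = 2*(ν:ℤ) - 1 := by omega
  have E1 : ∏ i ∈ Finset.range (2*ν), ((m+1) - (i : ℤ))
      = (∏ i ∈ Finset.range (2*ν-1), (m - i)) * (m+1) := by
    rw [hk, Finset.prod_range_succ', e1]
    norm_num
  have E2 : ∏ i ∈ Finset.range (2*ν), (m - (i : ℤ))
      = (∏ i ∈ Finset.range (2*ν-1), (m - i)) * (m - ((2*ν-1 : ℕ) : ℤ)) := by
    conv_lhs => rw [hk, Finset.prod_range_succ]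
  rw [mul_add, h1, h2, descPoch_prod, descPoch_prod, E1, E2, hc]
  ring

/-- **Lemma.** Let `p` be an odd prime, `1 ≤ ν ≤ (p-1)/2` and `m ∈ ℤ`.  Then
`binom(m+1, 2ν) + binom(m, 2ν) ≠ 0` in `𝔽_p` iff `2ν - 1 ≤ (m mod p) ≤ p - 1`, where
`m mod p = m % p ∈ {0, …, p-1}` is the representative of `m` modulo `p`. -/
theorem choose_add_choose_ne_zero_iff (p : ℕ) [Fact p.Prime] (hodd : Odd p)
    (ν : ℕ) (hν1 : 1 ≤ ν) (hν2 : ν ≤ (p - 1) / 2) (m : ℤ) :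
    ((Ring.choose (m + 1) (2 * ν) + Ring.choose m (2 * ν) : ℤ) : ZMod p) ≠ 0 ↔
      (2 * (ν : ℤ) - 1 ≤ m % (p : ℤ) ∧ m % (p : ℤ) ≤ (p : ℤ) - 1) := by
  have hp := Fact.out (p := p.Prime)
  obtain ⟨k, hk⟩ := hodd
  have hple : 2 * ν ≤ p - 1 := by omega
  have hp0 : (0 : ℤ) < p := by exact_mod_cast hp.pos
  have hr0 : 0 ≤ m % p := Int.emod_nonneg m (by positivity)
  have hrp : m % p < p := Int.emod_lt_of_pos m hp0
  -- factorial is nonzero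
  have hfac : (((2*ν).factorial : ℤ) : ZMod p) ≠ 0 := by
    rw [Int.cast_natCast, Ne, ZMod.natCast_eq_zero_iff]
    intro h
    have := (Nat.Prime.dvd_factorial hp).mp h
    omega
  have htwo : (2 : ZMod p) ≠ 0 := by
    have h2 : ((2:ℕ) : ZMod p) ≠ 0 := by
      rw [Ne, ZMod.natCast_eq_zero_iff]
      intro h
      have := Nat.le_of_dvd (by norm_num) h
      omega
    simpa using h2
  -- key comparison with m % p on factors
  have hA : ∀ j : ℤ, 0 ≤ j → j < p → (((m : ZMod p) = ((j : ℤ) : ZMod p)) ↔ m % p = j) := by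
    intro j hj0 hjp
    rw [ZMod.intCast_eq_intCast_iff', Int.emod_eq_of_lt hj0 hjp]
  have hAn : ∀ i : ℕ, i < p → (((m : ZMod p) = (i : ZMod p)) ↔ m % p = (i : ℤ)) := by
    intro i hip
    have := hA (i : ℤ) (Int.natCast_nonneg i) (by exact_mod_cast hip)
    simpa using this
  -- rewrite the LHS using the key identity
  have key := key_identity ν hν1 m
  have cast_key : (((2 * ν).factorial : ℤ) : ZMod p) *
      ((Ring.choose (m + 1) (2 * ν) + Ring.choose m (2 * ν) : ℤ) : ZMod p) =
      ((∏ i ∈ Finset.range (2*ν-1), (m - i) : ℤ) : ZMod p) *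
      ((2*m+2-2*(ν:ℤ) : ℤ) : ZMod p) := by
    rw [← Int.cast_mul, ← Int.cast_mul, key]
  have step : ((Ring.choose (m + 1) (2 * ν) + Ring.choose m (2 * ν) : ℤ) : ZMod p) ≠ 0 ↔
      (((∏ i ∈ Finset.range (2*ν-1), (m - i) : ℤ)) : ZMod p) ≠ 0 ∧
      (((2*m+2-2*(ν:ℤ) : ℤ)) : ZMod p) ≠ 0 := by
    constructor
    · intro h
      have h' := mul_ne_zero hfac h
      rw [cast_key] at h'
      exact mul_ne_zero_iff.mp h'
    · rintro ⟨h1, h2⟩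
      have h' := mul_ne_zero h1 h2
      rw [← cast_key] at h'
      exact fun hz => h' (by rw [hz, mul_zero])
  rw [step]
  -- analyze factors
  have hprod : (((∏ i ∈ Finset.range (2*ν-1), (m - i) : ℤ)) : ZMod p) ≠ 0 ↔
      ∀ i ∈ Finset.range (2*ν-1), m % p ≠ (i : ℤ) := by
    push_cast
    rw [Finset.prod_ne_zero_iff]
    refine forall₂_congr fun i hi => ?_
    rw [Finset.mem_range] at hi
    rw [sub_ne_zero]
    exact not_congr (hAn i (by omega))
  have hlin : (((2*m+2-2*(ν:ℤ) : ℤ)) : ZMod p) ≠ 0 ↔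
      m % p ≠ (ν : ℤ) - 1 := by
    have hcast : (((2*m+2-2*(ν:ℤ) : ℤ)) : ZMod p)
        = 2 * ((m : ZMod p) - (((ν:ℤ) - 1 : ℤ) : ZMod p)) := by push_cast; ring
    rw [hcast, mul_ne_zero_iff, sub_ne_zero]
    have hiff := hA ((ν:ℤ) - 1) (by omega) (by omega)
    constructor
    · intro h h'; exact h.2 (hiff.mpr h')
    · intro h; exact ⟨htwo, fun h' => h (hiff.mp h')⟩
  rw [hprod, hlin]
  constructor
  · rintro ⟨h1, _⟩
    refine ⟨?_, by omega⟩
    by_contra hlt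
    push_neg at hlt
    have hmem : (m % p).toNat ∈ Finset.range (2*ν - 1) := by
      rw [Finset.mem_range]; omega
    exact h1 _ hmem (by omega)
  · rintro ⟨h1, _⟩
    constructor
    · intro i hi
      rw [Finset.mem_range] at hi
      omega
    · omega

end SL2
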